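/- Let f₁,…,fₙ: ℝᵈ → ℝ each be L-smooth, and for an outlier subset O let ∇fᵢ(w) = ∇f_{i,I}(w) + hᵢ(w) with ‖hᵢ(w)‖ ≥ max(1, ‖∇f_{i,I}(w)‖), while ∇fᵢ(w) = ∇f_{i,I}(w) for inliers. Then for a uniformly random index i: E_i[‖∇fᵢ(w)‖²] ≤ 2L·(f_I(w) - f_I*) + 2L·Δ + 3λ·(1/n_O)·Σ_{i∈O}‖hᵢ(w)‖², where f_I(w) = (1/n)Σᵢ f_{i,I}(w), f_I* = min_w f_I(w), Δ = (1/n)Σᵢ(f_I* - min_w f_{i,I}(w)), and λ = n_O/n. -/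

import Mathlib

open Finset
open scoped RealInnerProductSpace

/-- The step `y = x - L⁻¹ • v` gives `m ≤ g y ≤ g x - ‖v‖² / (2L)`. -/
theorem sq_norm_le_of_quadratic_upper_bound {E : Type*} [NormedAddCommGroup E]
    [InnerProductSpace ℝ E] {g : E → ℝ} {x v : E} {L m : ℝ} (hL : 0 < L)
    (hupper : ∀ y, g y ≤ g x + ⟪v, y - x⟫ + L / 2 * ‖y - x‖ ^ 2) (hm : ∀ y, m ≤ g y) :
    ‖v‖ ^ 2 ≤ 2 * L * (g x - m) := by
  have hstep : g (x - L⁻¹ • v) ≤ g x - ‖v‖ ^ 2 / (2 * L) := by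
    have h := hupper (x - L⁻¹ • v)
    rw [sub_sub_cancel_left, inner_neg_right, real_inner_smul_right, real_inner_self_eq_norm_sq,
      norm_neg, norm_smul, Real.norm_of_nonneg (inv_nonneg.2 hL.le)] at h
    convert h using 1
    field_simp
    ring
  have hdecrease : ‖v‖ ^ 2 / (2 * L) ≤ g x - m := by linarith [hm (x - L⁻¹ • v)]
  rwa [div_le_iff₀' (by positivity)] at hdecrease

theorem norm_add_sq_le_of_norm_le {E : Type*} [SeminormedAddGroup E] {a b : E}
    (hab : ‖a‖ ≤ ‖b‖) : ‖a + b‖ ^ 2 ≤ ‖a‖ ^ 2 + 3 * ‖b‖ ^ 2 := by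
  have htri : ‖a + b‖ ≤ ‖a‖ + ‖b‖ := norm_add_le a b
  nlinarith [norm_nonneg (a + b), norm_nonneg a]

theorem stmt_13_general (n d nO : ℕ) (hn : 0 < n) (hnO : 0 < nO)
    (O : Finset (Fin n))
    (L : ℝ) (hL : 0 < L)
    (fI : Fin n → EuclideanSpace ℝ (Fin d) → ℝ)
    (hsmooth : ∀ i x y, fI i y ≤ fI i x + ⟪gradient (fI i) x, y - x⟫
        + L / 2 * ‖y - x‖ ^ 2)
    (gobs h : Fin n → EuclideanSpace ℝ (Fin d) → EuclideanSpace ℝ (Fin d))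
    (hout : ∀ i ∈ O, ∀ w, gobs i w = gradient (fI i) w + h i w)
    (hin : ∀ i ∉ O, ∀ w, gobs i w = gradient (fI i) w)
    (hlow : ∀ i ∈ O, ∀ w, (1:ℝ) ≤ ‖h i w‖ ∧ ‖gradient (fI i) w‖ ≤ ‖h i w‖)
    (m : Fin n → ℝ) (hm : ∀ i, IsGLB (Set.range (fI i)) (m i))
    (fIavg : EuclideanSpace ℝ (Fin d) → ℝ)
    (hfIavg : fIavg = fun w => (1 / (n : ℝ)) * ∑ i, fI i w)
    (fIstar : ℝ)
    (w : EuclideanSpace ℝ (Fin d)) :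
    (1 / (n : ℝ)) * ∑ i, ‖gobs i w‖ ^ 2
      ≤ 2 * L * (fIavg w - fIstar)
        + 2 * L * ((1 / (n : ℝ)) * ∑ i, (fIstar - m i))
        + 3 * ((nO : ℝ) / (n : ℝ)) * ((1 / (nO : ℝ)) * ∑ i ∈ O, ‖h i w‖ ^ 2) := by
  have hgrad : ∀ i, ‖gradient (fI i) w‖ ^ 2 ≤ 2 * L * (fI i w - m i) := fun i =>
    sq_norm_le_of_quadratic_upper_bound hL (hsmooth i w) fun y => (hm i).1 ⟨y, rfl⟩
  have hsample : ∀ i, ‖gobs i w‖ ^ 2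
      ≤ 2 * L * (fI i w - m i) + if i ∈ O then 3 * ‖h i w‖ ^ 2 else 0 := by
    intro i
    by_cases hi : i ∈ O
    · rw [if_pos hi, hout i hi w]
      linarith [hgrad i, norm_add_sq_le_of_norm_le (hlow i hi w).2]
    · rw [if_neg hi, hin i hi w, add_zero]
      exact hgrad i
  have hsum : ∑ i, ‖gobs i w‖ ^ 2
      ≤ 2 * L * (∑ i, fI i w - ∑ i, m i) + 3 * ∑ i ∈ O, ‖h i w‖ ^ 2 := by
    calc ∑ i, ‖gobs i w‖ ^ 2 ≤ _ := sum_le_sum fun i _ => hsample i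
      _ = _ := by
        rw [sum_add_distrib, sum_ite_mem, univ_inter, ← mul_sum, ← mul_sum, sum_sub_distrib]
  have hn' : (0 : ℝ) < n := by exact_mod_cast hn
  have hnO' : (0 : ℝ) < nO := by exact_mod_cast hnO
  subst hfIavg
  rw [sum_sub_distrib, sum_const, card_univ, Fintype.card_fin, nsmul_eq_mul]
  field_simp
  linarith

/-- Second-moment bound on observed gradients under additive outlier
perturbations, for L-smooth outlier-free components. -/
theorem stmt_13 (n d nO : ℕ) (hn : 0 < n) (hnO : 0 < nO)
    (O : Finset (Fin n)) (hOcard : O.card = nO)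
    (L : ℝ) (hL : 0 < L)
    (fI : Fin n → EuclideanSpace ℝ (Fin d) → ℝ)
    (hsmooth : ∀ i x y, fI i y ≤ fI i x + ⟪gradient (fI i) x, y - x⟫
        + L / 2 * ‖y - x‖ ^ 2)
    (gobs h : Fin n → EuclideanSpace ℝ (Fin d) → EuclideanSpace ℝ (Fin d))
    (hout : ∀ i ∈ O, ∀ w, gobs i w = gradient (fI i) w + h i w)
    (hin : ∀ i ∉ O, ∀ w, gobs i w = gradient (fI i) w)
    (hlow : ∀ i ∈ O, ∀ w, (1:ℝ) ≤ ‖h i w‖ ∧ ‖gradient (fI i) w‖ ≤ ‖h i w‖)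
    (m : Fin n → ℝ) (hm : ∀ i, IsGLB (Set.range (fI i)) (m i))
    (fIavg : EuclideanSpace ℝ (Fin d) → ℝ)
    (hfIavg : fIavg = fun w => (1 / (n : ℝ)) * ∑ i, fI i w)
    (fIstar : ℝ) (hstar : IsGLB (Set.range fIavg) fIstar)
    (w : EuclideanSpace ℝ (Fin d)) :
    (1 / (n : ℝ)) * ∑ i, ‖gobs i w‖ ^ 2
      ≤ 2 * L * (fIavg w - fIstar)
        + 2 * L * ((1 / (n : ℝ)) * ∑ i, (fIstar - m i))
        + 3 * ((nO : ℝ) / (n : ℝ)) * ((1 / (nO : ℝ)) * ∑ i ∈ O, ‖h i w‖ ^ 2) :=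
  stmt_13_general n d nO hn hnO O L hL fI hsmooth gobs h hout hin hlow m hm fIavg hfIavg fIstar w
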